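/- arXiv:1005.2919 — 4 statements merged into one kernel-verified Lean document; each statement's English description precedes it below -/
import Mathlib

section
/- If H(z) = 1 + 6z + 6z² + 2z³, then the formal power series 1/H(−z) = 1/(1 − 6z + 6z² − 2z³) has all coefficients nonnegative (in fact positive) integers. -/
open PowerSeries

/-!
Multiplying out `f · (1 - 6z + 6z² - 2z³) = 1` shows that the coefficients `a n` of `f` satisfy
`a (n + 3) = 6 a (n + 2) - 6 a (n + 1) + 2 a n` with `a 0 = 1`, `a 1 = 6`, `a 2 = 30`, so they are
integers. They at least quadruple at each step: if `0 < a n`, `4 a n ≤ a (n + 1)` and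
`4 a (n + 1) ≤ a (n + 2)`, then `a (n + 3) ≥ 6 a (n + 2) - (3/2) a (n + 2) ≥ 4 a (n + 2)`.
-/

theorem PowerSeries.mk_mul_one_sub_cubic_eq_one {R : Type*} [CommRing R] {u : ℕ → R} {a b c : R}
    (h0 : u 0 = 1) (h1 : u 1 = a) (h2 : u 2 = a * u 1 + b)
    (hrec : ∀ n, u (n + 3) = a * u (n + 2) + b * u (n + 1) + c * u n) :
    mk u * (1 - C a * X - C b * X ^ 2 - C c * X ^ 3) = 1 := by
  have hexpand : mk u * (1 - C a * X - C b * X ^ 2 - C c * X ^ 3) =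
      mk u - C a * (X ^ 1 * mk u) - C b * (X ^ 2 * mk u) - C c * (X ^ 3 * mk u) := by ring
  rw [hexpand]
  ext (_ | _ | _ | n)
  iterate 3 simp [coeff_X_pow_mul', h0, h1, h2]
  simp [coeff_X_pow_mul', hrec]
  ring

def poincareBettiCoeff : ℕ → ℤ
  | 0 => 1
  | 1 => 6
  | 2 => 30
  | n + 3 =>
    6 * poincareBettiCoeff (n + 2) - 6 * poincareBettiCoeff (n + 1) + 2 * poincareBettiCoeff n

theorem poincareBettiCoeff_growth (n : ℕ) :
    0 < poincareBettiCoeff n ∧ 4 * poincareBettiCoeff n ≤ poincareBettiCoeff (n + 1) ∧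
      4 * poincareBettiCoeff (n + 1) ≤ poincareBettiCoeff (n + 2) := by
  induction n with
  | zero => decide
  | succ n ih =>
    obtain ⟨hpos, hstep, hstep'⟩ := ih
    refine ⟨by omega, hstep', ?_⟩
    show 4 * poincareBettiCoeff (n + 2) ≤
      6 * poincareBettiCoeff (n + 2) - 6 * poincareBettiCoeff (n + 1) + 2 * poincareBettiCoeff n
    omega

theorem inv_cubic_eq_mk_poincareBettiCoeff :
    (1 - 6 * X + 6 * X ^ 2 - 2 * X ^ 3 : ℚ⟦X⟧)⁻¹ =
      mk fun n => (poincareBettiCoeff n : ℚ) := by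
  have hpoly : (1 - 6 * X + 6 * X ^ 2 - 2 * X ^ 3 : ℚ⟦X⟧) =
      1 - C 6 * X - C (-6) * X ^ 2 - C 2 * X ^ 3 := by
    simp only [map_neg, map_ofNat]
    ring
  rw [hpoly, inv_eq_iff_mul_eq_one (by simp)]
  refine mk_mul_one_sub_cubic_eq_one ?_ ?_ ?_ fun n => ?_ <;>
    simp [poincareBettiCoeff] <;> ring

/-- If `H(z) = 1 + 6z + 6z² + 2z³`, then the formal power series
`1/H(−z) = 1/(1 − 6z + 6z² − 2z³)` has all coefficients positive integers. -/
theorem stmt_1 :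
    ∀ n : ℕ, ∃ m : ℕ, 0 < m ∧
      (PowerSeries.coeff n)
        ((1 - 6 * PowerSeries.X + 6 * PowerSeries.X ^ 2 - 2 * PowerSeries.X ^ 3 :
          PowerSeries ℚ)⁻¹) = m := by
  intro n
  obtain ⟨hpos, -⟩ := poincareBettiCoeff_growth n
  refine ⟨(poincareBettiCoeff n).toNat, by omega, ?_⟩
  rw [inv_cubic_eq_mk_poincareBettiCoeff, coeff_mk]
  exact_mod_cast (Int.toNat_of_nonneg hpos.le).symm
end

section
/- If R(z) = 1 + 5z + 7z² and 1/R^!(z) = ∏_{n≥1} (1−z^{2n−1})⁵(1−z^{2n})³, then the first coefficients of R^!(z) agree with those of 1/R(−z) up to degree 2 but differ in some higher degree; in particular R^!(z) is not equal to 1/R(−z) as formal power series. -/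
/-!
Modulo `z⁶` only the factors with `n ≤ 3` of `∏ (1 - z^(2n-1))⁵ (1 - z^(2n))³` matter, and
their product is `1 - 5z + 7z² - 11z⁵ = R(-z) - 11z⁵`. If `g - f = z⁵ h`, then
`f⁻¹ - g⁻¹ = z⁵ h f⁻¹ g⁻¹`, so `1/f` and `1/R(-z)` agree below degree `5` and differ by
`11` in degree `5`.
-/

open PowerSeries Finset

section PartialProduct

variable {R : Type*} [CommRing R]

def denomPartialProd (x : R) (N : ℕ) : R :=
  ∏ n ∈ range N, (1 - x ^ (2 * n + 1)) ^ 5 * (1 - x ^ (2 * n + 2)) ^ 3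

theorem denomPartialProd_eq_of_pow_six_eq_zero {x : R} (hx : x ^ 6 = 0) {N : ℕ} (hN : 3 ≤ N) :
    denomPartialProd x N = 1 - 5 * x + 7 * x ^ 2 - 11 * x ^ 5 := by
  have hpow : ∀ k, 6 ≤ k → x ^ k = 0 := fun k hk => pow_eq_zero_of_le hk hx
  have htail : ∏ n ∈ Ico 3 N, (1 - x ^ (2 * n + 1)) ^ 5 * (1 - x ^ (2 * n + 2)) ^ 3 = 1 :=
    prod_eq_one fun n hn => by
      rw [hpow _ (by simp at hn; omega), hpow _ (by simp at hn; omega)]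
      ring
  rw [denomPartialProd, ← prod_range_mul_prod_Ico _ hN, htail, mul_one]
  simp only [prod_range_succ, prod_range_zero]
  ring_nf
  simp (disch := omega) only [hpow, zero_mul, add_zero, sub_zero]

theorem X_pow_six_dvd_denomPartialProd_sub {N : ℕ} (hN : 3 ≤ N) :
    (X : R⟦X⟧) ^ 6 ∣ denomPartialProd X N - (1 - 5 * X + 7 * X ^ 2 - 11 * X ^ 5) := by
  let π := Ideal.Quotient.mk (Ideal.span {(X : R⟦X⟧) ^ 6})
  have hX : π X ^ 6 = 0 := by
    rw [← map_pow, Ideal.Quotient.eq_zero_iff_mem]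
    exact Ideal.mem_span_singleton_self _
  rw [← Ideal.mem_span_singleton, ← Ideal.Quotient.eq]
  simp only [denomPartialProd, map_prod, map_sub, map_add, map_mul, map_pow, map_one,
    map_ofNat] at hX ⊢
  exact denomPartialProd_eq_of_pow_six_eq_zero hX hN

end PartialProduct

section Inverse

variable {k : Type*} [Field k] {f g h : k⟦X⟧} {n : ℕ}

theorem inv_sub_inv_eq_X_pow_mul (hf : constantCoeff f ≠ 0) (hg : constantCoeff g ≠ 0)
    (hfg : g - f = X ^ n * h) : f⁻¹ - g⁻¹ = X ^ n * (h * f⁻¹ * g⁻¹) := by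
  calc f⁻¹ - g⁻¹ = (g - f) * f⁻¹ * g⁻¹ := by
        rw [sub_mul, sub_mul, mul_right_comm g, PowerSeries.mul_inv_cancel g hg,
          PowerSeries.mul_inv_cancel f hf, one_mul, one_mul]
    _ = X ^ n * (h * f⁻¹ * g⁻¹) := by rw [hfg]; ring

theorem coeff_inv_eq_of_lt (hf : constantCoeff f ≠ 0) (hg : constantCoeff g ≠ 0)
    (hfg : g - f = X ^ n * h) {m : ℕ} (hm : m < n) : coeff m f⁻¹ = coeff m g⁻¹ := by
  rw [← sub_eq_zero, ← map_sub, inv_sub_inv_eq_X_pow_mul hf hg hfg, coeff_X_pow_mul',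
    if_neg (by omega)]

theorem coeff_inv_sub_coeff_inv (hf : constantCoeff f ≠ 0) (hg : constantCoeff g ≠ 0)
    (hfg : g - f = X ^ n * h) :
    coeff n f⁻¹ - coeff n g⁻¹ = constantCoeff h * (constantCoeff f)⁻¹ * (constantCoeff g)⁻¹ := by
  rw [← map_sub, inv_sub_inv_eq_X_pow_mul hf hg hfg, coeff_X_pow_mul', if_pos le_rfl,
    Nat.sub_self, coeff_zero_eq_constantCoeff, map_mul, map_mul, constantCoeff_inv,
    constantCoeff_inv]

end Inverse

/-- Let `f` be the infinite product `∏_{n≥1} (1−z^{2n−1})⁵(1−z^{2n})³`, characterized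
by agreement with its partial products in low degrees, and let `R(z) = 1 + 5z + 7z²`.
Then the coefficients of `R^!(z) = 1/f(z)` agree with those of `1/R(−z)` in degrees
`≤ 2`, but the two power series differ in some higher degree; in particular
`R^!(z) ≠ 1/R(−z)`. -/
theorem stmt_9 (f : PowerSeries ℚ)
    (hf : ∀ k N : ℕ, k ≤ N →
      (PowerSeries.coeff (R := ℚ) k) f =
        (PowerSeries.coeff (R := ℚ) k)
          (∏ n ∈ Finset.range N, (1 - X ^ (2*n+1))^5 * (1 - X ^ (2*n+2))^3)) :
    ((PowerSeries.coeff (R := ℚ) 0) f⁻¹ =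
        (PowerSeries.coeff (R := ℚ) 0) ((1 - 5*X + 7*X^2 : PowerSeries ℚ)⁻¹)) ∧
    ((PowerSeries.coeff (R := ℚ) 1) f⁻¹ =
        (PowerSeries.coeff (R := ℚ) 1) ((1 - 5*X + 7*X^2 : PowerSeries ℚ)⁻¹)) ∧
    ((PowerSeries.coeff (R := ℚ) 2) f⁻¹ =
        (PowerSeries.coeff (R := ℚ) 2) ((1 - 5*X + 7*X^2 : PowerSeries ℚ)⁻¹)) ∧
    (∃ k : ℕ, 3 ≤ k ∧ (PowerSeries.coeff (R := ℚ) k) f⁻¹ ≠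
        (PowerSeries.coeff (R := ℚ) k) ((1 - 5*X + 7*X^2 : PowerSeries ℚ)⁻¹)) ∧
    f⁻¹ ≠ (1 - 5*X + 7*X^2 : PowerSeries ℚ)⁻¹ := by
  set g : ℚ⟦X⟧ := 1 - 5 * X + 7 * X ^ 2
  have hf0 : constantCoeff f = 1 := by simpa using hf 0 0 le_rfl
  have hg0 : constantCoeff g = 1 := by simp [g]
  have hfP : X ^ 6 ∣ f - denomPartialProd X 5 :=
    X_pow_dvd_iff.mpr fun k hk => by rw [map_sub, hf k 5 (by omega), denomPartialProd, sub_self]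
  obtain ⟨q, hq⟩ := dvd_add hfP (X_pow_six_dvd_denomPartialProd_sub (N := 5) (by norm_num))
  have hgf : g - f = X ^ 5 * (11 - X * q) := by linear_combination -hq
  have hfu : constantCoeff f ≠ 0 := by simp [hf0]
  have hgu : constantCoeff g ≠ 0 := by simp [hg0]
  have hlow : ∀ m < 5, coeff m f⁻¹ = coeff m g⁻¹ := fun m hm =>
    coeff_inv_eq_of_lt hfu hgu hgf hm
  have hdiff : coeff 5 f⁻¹ ≠ coeff 5 g⁻¹ := by
    have h5 := coeff_inv_sub_coeff_inv hfu hgu hgf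
    rw [hf0, hg0, map_sub, map_mul, constantCoeff_X, zero_mul, sub_zero, map_ofNat] at h5
    intro h
    rw [h, sub_self] at h5
    norm_num at h5
  exact ⟨hlow 0 (by norm_num), hlow 1 (by norm_num), hlow 2 (by norm_num), ⟨5, by norm_num, hdiff⟩,
    fun h => hdiff (by rw [h])⟩
end

section
/- The formal power series f(z) = 1/((1−2z)²·∏_{n≥1}(1−zⁿ)) satisfies: f is not a rational function of z; equivalently, ∏_{n≥1}(1−zⁿ) is not a rational function. -/
open PowerSeries

/-- A formal power series `g` over `ℚ` is rational if `g = p/q` for polynomials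
`p, q` with `q(0) ≠ 0`. -/
def IsRationalPS (g : PowerSeries ℚ) : Prop :=
  ∃ p q : Polynomial ℚ, q.coeff 0 ≠ 0 ∧ (q : PowerSeries ℚ) * g = (p : PowerSeries ℚ)

/-!
Suppose `q E = p` with polynomials `p, q`, and evaluate at real `x ∈ (0, 1)`. The partial products
`P_N = ∏_{k<N} (1 - X^(k+1))` have coefficients majorized by those of `∏_{k<N} (1 + X^(k+1))`,
whose value at `y < 1` is at most `exp (1 / (1 - y))` uniformly in `N`. Since `q P_N - p` has no
terms of degree `≤ N`, taking `x < y` makes `(q P_N - p)(x)` geometrically small, and letting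
`N → ∞` gives `|p(x)| ≤ |q(x)| P_m(x) ≤ m! (1 - x)^m |q(x)|` for every `m`. A nonzero polynomial
cannot vanish to infinite order at `1`, so `p = 0`, which contradicts `q(0) E(0) = q(0) ≠ 0`.
-/

section EulerProduct

open Polynomial Finset Filter Topology Set Nat

namespace Polynomial

section Majorant

variable {R : Type*} [CommRing R] [LinearOrder R] [IsStrictOrderedRing R]

lemma abs_coeff_mul_le {f g F G : R[X]} (hf : ∀ n, |f.coeff n| ≤ F.coeff n)
    (hg : ∀ n, |g.coeff n| ≤ G.coeff n) (n : ℕ) : |(f * g).coeff n| ≤ (F * G).coeff n := by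
  rw [coeff_mul, coeff_mul]
  refine (abs_sum_le_sum_abs _ _).trans (sum_le_sum fun ij _ => ?_)
  rw [abs_mul]
  exact mul_le_mul (hf _) (hg _) (abs_nonneg _) ((abs_nonneg _).trans (hf _))

lemma abs_coeff_one_sub_X_pow_le (k n : ℕ) :
    |(1 - Polynomial.X ^ k : R[X]).coeff n| ≤ (1 + Polynomial.X ^ k : R[X]).coeff n := by
  have h1 : (0 : R) ≤ (1 : R[X]).coeff n := by
    rw [Polynomial.coeff_one]; split_ifs <;> norm_num
  have h2 : (0 : R) ≤ (Polynomial.X ^ k : R[X]).coeff n := by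
    rw [coeff_X_pow]; split_ifs <;> norm_num
  rw [coeff_sub, coeff_add]
  exact (abs_sub _ _).trans (by rw [abs_of_nonneg h1, abs_of_nonneg h2])

lemma abs_coeff_mul_pow_le_eval {f F : R[X]} (hf : ∀ n, |f.coeff n| ≤ F.coeff n) {y : R}
    (hy : 0 ≤ y) (n : ℕ) : |f.coeff n| * y ^ n ≤ F.eval y := by
  have hF : ∀ i, 0 ≤ F.coeff i * y ^ i := fun i =>
    mul_nonneg ((abs_nonneg _).trans (hf i)) (pow_nonneg hy i)
  rw [eval_eq_sum_range' (n := max (n + 1) (F.natDegree + 1)) (by omega)]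
  exact (mul_le_mul_of_nonneg_right (hf n) (pow_nonneg hy n)).trans
    (single_le_sum (fun i _ => hF i) (by simp))

noncomputable def absCoeffs (q : R[X]) : R[X] := ∑ i ∈ q.support, monomial i |q.coeff i|

@[simp]
lemma coeff_absCoeffs (q : R[X]) (n : ℕ) : (absCoeffs q).coeff n = |q.coeff n| := by
  simp only [absCoeffs, finsetSum_coeff, coeff_monomial, sum_ite_eq', mem_support_iff]
  split_ifs with h
  · rfl
  · rw [not_not.mp h, abs_zero]

end Majorant

lemma abs_eval_le_geom_tail (f : ℝ[X]) {N : ℕ} {x y K : ℝ} (hx : 0 ≤ x)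
    (hxy : x < y) (h0 : ∀ n ≤ N, f.coeff n = 0) (hK : ∀ n, |f.coeff n| * y ^ n ≤ K) :
    |f.eval x| ≤ K * ((x / y) ^ (N + 1) / (1 - x / y)) := by
  have hy : 0 < y := hx.trans_lt hxy
  set M := max (N + 1) (f.natDegree + 1)
  have hterm : ∀ n, |f.coeff n * x ^ n| ≤ K * (x / y) ^ n := fun n => by
    rw [abs_mul, abs_pow, abs_of_nonneg hx, ← mul_div_cancel₀ x hy.ne', mul_pow, ← mul_assoc,
      mul_div_cancel₀ x hy.ne']
    exact mul_le_mul_of_nonneg_right (hK n) (by positivity)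
  have hlow : ∑ n ∈ range (N + 1), f.coeff n * x ^ n = 0 :=
    sum_eq_zero fun n hn => by rw [h0 n (Nat.lt_succ_iff.mp (mem_range.mp hn)), zero_mul]
  rw [eval_eq_sum_range' (n := M) (by omega), ← sum_range_add_sum_Ico _ (le_max_left _ _), hlow,
    zero_add]
  calc |∑ n ∈ Ico (N + 1) M, f.coeff n * x ^ n|
      ≤ ∑ n ∈ Ico (N + 1) M, K * (x / y) ^ n :=
        (abs_sum_le_sum_abs _ _).trans (sum_le_sum fun n _ => hterm n)
    _ ≤ K * ((x / y) ^ (N + 1) / (1 - x / y)) := by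
      rw [← mul_sum]
      have hK0 : 0 ≤ K := (mul_nonneg (abs_nonneg _) (pow_nonneg hy.le 0)).trans (hK 0)
      exact mul_le_mul_of_nonneg_left (geom_sum_Ico_le_of_lt_one (by positivity)
        ((div_lt_one hy).mpr hxy)) hK0

lemma eq_zero_of_abs_eval_le_mul_one_sub_pow (p q : ℝ[X])
    (h : ∀ m : ℕ, ∃ c, ∀ x ∈ Ioo (0 : ℝ) 1, |p.eval x| ≤ c * (1 - x) ^ m * |q.eval x|) :
    p = 0 := by
  by_contra hp
  set M := p.rootMultiplicity 1
  set u := p /ₘ (X - C 1) ^ M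
  have hfac : (X - C 1) ^ M * u = p := pow_mul_divByMonic_rootMultiplicity_eq p 1
  obtain ⟨c, hc⟩ := h (M + 1)
  have hu : ∀ x ∈ Ioo (0 : ℝ) 1, |u.eval x| ≤ c * (1 - x) * |q.eval x| := by
    intro x hx
    have hpos : 0 < (1 - x) ^ M := pow_pos (sub_pos.mpr hx.2) M
    have hpx := hc x hx
    rw [← hfac, eval_mul, eval_pow, eval_sub, eval_X, eval_C, abs_mul, abs_pow, abs_sub_comm,
      abs_of_pos (sub_pos.mpr hx.2)] at hpx
    refine le_of_mul_le_mul_left (hpx.trans_eq ?_) hpos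
    ring
  have hlim : Tendsto (fun x => c * (1 - x) * |q.eval x|) (𝓝[<] 1) (𝓝 0) := by
    have hcont : Continuous fun x => c * (1 - x) * |q.eval x| := by fun_prop
    simpa using (hcont.tendsto 1).mono_left nhdsWithin_le_nhds
  have hlimu : Tendsto (fun x => |u.eval x|) (𝓝[<] 1) (𝓝 |u.eval 1|) :=
    (u.continuous.abs.tendsto 1).mono_left nhdsWithin_le_nhds
  have hu1 : |u.eval 1| ≤ 0 :=
    le_of_tendsto_of_tendsto hlimu hlim
      (eventually_of_mem (Ioo_mem_nhdsLT (by norm_num : (0 : ℝ) < 1)) hu)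
  exact eval_divByMonic_pow_rootMultiplicity_ne_zero 1 hp (abs_nonpos_iff.mp hu1)

end Polynomial

noncomputable def eulerPoly (R : Type*) [CommRing R] (N : ℕ) : R[X] :=
  ∏ k ∈ range N, (1 - Polynomial.X ^ (k + 1))

noncomputable def distinctPartsPoly (N : ℕ) : ℝ[X] :=
  ∏ k ∈ range N, (1 + Polynomial.X ^ (k + 1))

lemma map_eulerPoly {R S : Type*} [CommRing R] [CommRing S] (f : R →+* S) (N : ℕ) :
    (eulerPoly R N).map f = eulerPoly S N := by
  simp [eulerPoly, Polynomial.map_prod]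

lemma coe_eulerPoly {R : Type*} [CommRing R] (N : ℕ) :
    (eulerPoly R N : PowerSeries R) = ∏ k ∈ range N, (1 - PowerSeries.X ^ (k + 1)) := by
  rw [eulerPoly, ← Polynomial.coeToPowerSeries.ringHom_apply, map_prod]
  simp [Polynomial.coeToPowerSeries.ringHom_apply]

lemma eval_eulerPoly (N : ℕ) (x : ℝ) :
    (eulerPoly ℝ N).eval x = ∏ k ∈ range N, (1 - x ^ (k + 1)) := by
  simp [eulerPoly, eval_prod]

lemma eval_eulerPoly_nonneg (N : ℕ) {x : ℝ} (hx0 : 0 ≤ x) (hx1 : x ≤ 1) :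
    0 ≤ (eulerPoly ℝ N).eval x := by
  rw [eval_eulerPoly]
  exact prod_nonneg fun k _ => sub_nonneg.mpr (pow_le_one₀ hx0 hx1)

lemma eval_eulerPoly_le {m N : ℕ} (hmN : m ≤ N) {x : ℝ} (hx0 : 0 ≤ x) (hx1 : x ≤ 1) :
    (eulerPoly ℝ N).eval x ≤ m ! * (1 - x) ^ m := by
  have hfac : ∀ k, 0 ≤ 1 - x ^ (k + 1) := fun k => sub_nonneg.mpr (pow_le_one₀ hx0 hx1)
  have hbern : ∀ n : ℕ, 1 - x ^ n ≤ n * (1 - x) := fun n => by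
    have := one_add_mul_le_pow (a := x - 1) (by linarith) n
    rw [add_sub_cancel] at this
    linarith
  rw [eval_eulerPoly, ← prod_range_mul_prod_Ico _ hmN]
  calc (∏ k ∈ range m, (1 - x ^ (k + 1))) * ∏ k ∈ Ico m N, (1 - x ^ (k + 1))
      ≤ (∏ k ∈ range m, ((k + 1 : ℝ) * (1 - x))) * 1 := by
        refine mul_le_mul (prod_le_prod (fun k _ => hfac k) fun k _ => ?_)
          (prod_le_one (fun k _ => hfac k) fun k _ => ?_) (prod_nonneg fun k _ => hfac k)
          (prod_nonneg fun k _ => ?_)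
        · exact_mod_cast hbern (k + 1)
        · exact sub_le_self _ (pow_nonneg hx0 _)
        · exact mul_nonneg (by positivity) (sub_nonneg.mpr hx1)
    _ = m ! * (1 - x) ^ m := by
      rw [mul_one, prod_mul_distrib, prod_const, card_range, ← prod_range_add_one_eq_factorial]
      push_cast; rfl

lemma abs_coeff_eulerPoly_le (N n : ℕ) :
    |(eulerPoly ℝ N).coeff n| ≤ (distinctPartsPoly N).coeff n := by
  induction N generalizing n with
  | zero =>
    simp only [eulerPoly, distinctPartsPoly, prod_range_zero, Polynomial.coeff_one]
    split_ifs <;> simp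
  | succ N ih =>
    rw [eulerPoly, distinctPartsPoly, prod_range_succ, prod_range_succ]
    exact abs_coeff_mul_le ih (abs_coeff_one_sub_X_pow_le _) n

lemma eval_distinctPartsPoly_le (N : ℕ) {y : ℝ} (hy0 : 0 ≤ y) (hy1 : y < 1) :
    (distinctPartsPoly N).eval y ≤ Real.exp (1 / (1 - y)) := by
  simp only [distinctPartsPoly, eval_prod, eval_add, eval_one, eval_pow, eval_X]
  calc ∏ k ∈ range N, (1 + y ^ (k + 1)) ≤ ∏ k ∈ range N, Real.exp (y ^ k) := by
        refine prod_le_prod (fun k _ => by positivity) fun k _ => ?_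
        linarith [Real.add_one_le_exp (y ^ k),
          pow_le_pow_of_le_one hy0 hy1.le (by omega : k ≤ k + 1)]
    _ = Real.exp (∑ k ∈ Ico 0 N, y ^ k) := by rw [Real.exp_sum, range_eq_Ico]
    _ ≤ Real.exp (1 / (1 - y)) := by
        gcongr
        simpa using geom_sum_Ico_le_of_lt_one (m := 0) (n := N) hy0 hy1

lemma abs_coeff_mul_eulerPoly_mul_pow_le (q : ℝ[X]) (N n : ℕ) {y : ℝ} (hy0 : 0 ≤ y)
    (hy1 : y < 1) :
    |(q * eulerPoly ℝ N).coeff n| * y ^ n ≤ (absCoeffs q).eval y * Real.exp (1 / (1 - y)) := by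
  have habsq : ∀ n, |q.coeff n| ≤ (absCoeffs q).coeff n := fun n => (coeff_absCoeffs q n).ge
  have hq0 : 0 ≤ (absCoeffs q).eval y :=
    (mul_nonneg (abs_nonneg _) (pow_nonneg hy0 0)).trans (abs_coeff_mul_pow_le_eval habsq hy0 0)
  calc |(q * eulerPoly ℝ N).coeff n| * y ^ n
      ≤ (absCoeffs q * distinctPartsPoly N).eval y :=
        abs_coeff_mul_pow_le_eval (abs_coeff_mul_le habsq (abs_coeff_eulerPoly_le N)) hy0 n
    _ ≤ (absCoeffs q).eval y * Real.exp (1 / (1 - y)) := by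
        rw [eval_mul]
        exact mul_le_mul_of_nonneg_left (eval_distinctPartsPoly_le N hy0 hy1) hq0

lemma abs_eval_le_of_coeff_mul_eulerPoly {p q : ℝ[X]}
    (hpq : ∀ N, ∀ n ≤ N, (q * eulerPoly ℝ N).coeff n = p.coeff n) (m : ℕ) {x : ℝ}
    (hx : x ∈ Ioo (0 : ℝ) 1) : |p.eval x| ≤ m ! * (1 - x) ^ m * |q.eval x| := by
  obtain ⟨y, hxy, hy1⟩ := exists_between hx.2
  have hy0 : 0 ≤ y := hx.1.le.trans hxy.le
  set K := (absCoeffs q).eval y * Real.exp (1 / (1 - y))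
  have hK0 : 0 ≤ K := (mul_nonneg (abs_nonneg _) (pow_nonneg hy0 0)).trans
    (abs_coeff_mul_eulerPoly_mul_pow_le q 0 0 hy0 hy1)
  set B := m ! * (1 - x) ^ m * |q.eval x|
  have hbound : ∀ N ≥ max m p.natDegree,
      |p.eval x| ≤ B + K * ((x / y) ^ (N + 1) / (1 - x / y)) := by
    intro N hN
    set f := q * eulerPoly ℝ N - p
    have hf0 : ∀ n ≤ N, f.coeff n = 0 := fun n hn => by rw [coeff_sub, hpq N n hn, sub_self]
    have hfK : ∀ n, |f.coeff n| * y ^ n ≤ K := fun n => by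
      rcases le_or_gt n N with hn | hn
      · rw [hf0 n hn, abs_zero, zero_mul]
        exact hK0
      · rw [coeff_sub, coeff_eq_zero_of_natDegree_lt (by omega : p.natDegree < n), sub_zero]
        exact abs_coeff_mul_eulerPoly_mul_pow_le q N n hy0 hy1
    have hP0 := eval_eulerPoly_nonneg N hx.1.le hx.2.le
    have hP := eval_eulerPoly_le (le_of_max_le_left hN) hx.1.le hx.2.le
    calc |p.eval x| = |q.eval x * (eulerPoly ℝ N).eval x - f.eval x| := by
          simp only [f, eval_sub, eval_mul, sub_sub_cancel]
      _ ≤ |q.eval x| * (eulerPoly ℝ N).eval x + |f.eval x| := by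
          rw [← abs_of_nonneg hP0, ← abs_mul, abs_of_nonneg hP0]
          exact abs_sub _ _
      _ ≤ B + K * ((x / y) ^ (N + 1) / (1 - x / y)) := by
          gcongr
          · exact (mul_le_mul_of_nonneg_left hP (abs_nonneg _)).trans_eq (by ring)
          · exact abs_eval_le_geom_tail f hx.1.le hxy hf0 hfK
  have htail : Tendsto (fun N : ℕ => K * ((x / y) ^ (N + 1) / (1 - x / y))) atTop (𝓝 0) := by
    have hy : 0 < y := hx.1.trans hxy
    have hpow := (tendsto_pow_atTop_nhds_zero_of_lt_one (div_nonneg hx.1.le hy.le)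
      ((div_lt_one hy).mpr hxy)).comp (tendsto_add_atTop_nat 1)
    simpa using (hpow.div_const (1 - x / y)).const_mul K
  simpa using ge_of_tendsto (tendsto_const_nhds.add htail) (eventually_atTop.mpr ⟨_, hbound⟩)

lemma coeff_mul_eulerPoly_eq {R : Type*} [CommRing R] {E : PowerSeries R} {N : ℕ}
    (hE : ∀ k ≤ N, PowerSeries.coeff k E =
      PowerSeries.coeff k (∏ j ∈ range N, (1 - PowerSeries.X ^ (j + 1)) : PowerSeries R))
    (q : R[X]) {n : ℕ} (hn : n ≤ N) :
    (q * eulerPoly R N).coeff n = PowerSeries.coeff n ((q : PowerSeries R) * E) := by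
  rw [← Polynomial.coeff_coe, Polynomial.coe_mul, coe_eulerPoly, PowerSeries.coeff_mul,
    PowerSeries.coeff_mul]
  refine sum_congr rfl fun ij hij => ?_
  rw [hE ij.2 (by have := mem_antidiagonal.mp hij; omega)]

theorem not_isRationalPS_of_coeff_eq_eulerPoly {E : PowerSeries ℚ}
    (hE : ∀ k N : ℕ, k ≤ N → PowerSeries.coeff k E =
      PowerSeries.coeff k (∏ n ∈ range N, (1 - PowerSeries.X ^ (n + 1)) : PowerSeries ℚ)) :
    ¬ IsRationalPS E := by
  rintro ⟨p, q, hq0, hqE⟩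
  have hcoeff : ∀ N, ∀ n ≤ N, (q.map (algebraMap ℚ ℝ) * eulerPoly ℝ N).coeff n =
      (p.map (algebraMap ℚ ℝ)).coeff n := fun N n hn => by
    rw [← map_eulerPoly (algebraMap ℚ ℝ), ← Polynomial.map_mul, Polynomial.coeff_map,
      Polynomial.coeff_map, coeff_mul_eulerPoly_eq (fun k hk => hE k N hk) q hn, hqE,
      Polynomial.coeff_coe]
  have hp : p = 0 := (Polynomial.map_eq_zero_iff (algebraMap ℚ ℝ).injective).mp <|
    eq_zero_of_abs_eval_le_mul_one_sub_pow _ _ fun m =>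
      ⟨m !, fun x hx => abs_eval_le_of_coeff_mul_eulerPoly hcoeff m hx⟩
  have h0 := coeff_mul_eulerPoly_eq (fun k hk => hE k 0 hk) q le_rfl
  rw [hqE, hp, eulerPoly, prod_range_zero, mul_one, Polynomial.coeff_coe] at h0
  exact hq0 (h0.trans (Polynomial.coeff_zero 0))

lemma IsRationalPS.of_inv {g : PowerSeries ℚ} (hg : PowerSeries.constantCoeff g ≠ 0)
    (h : IsRationalPS g⁻¹) : IsRationalPS g := by
  obtain ⟨p, q, hq0, hqg⟩ := h
  refine ⟨q, p, ?_, ?_⟩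
  · have hp0 := congrArg PowerSeries.constantCoeff hqg
    rw [map_mul, PowerSeries.constantCoeff_inv, Polynomial.constantCoeff_coe,
      Polynomial.constantCoeff_coe] at hp0
    rw [← hp0]
    exact mul_ne_zero hq0 (inv_ne_zero hg)
  · rw [← hqg, mul_assoc, PowerSeries.inv_mul_cancel _ hg, mul_one]

lemma IsRationalPS.of_coe_mul {r : ℚ[X]} (hr : r.coeff 0 ≠ 0) {g : PowerSeries ℚ}
    (h : IsRationalPS (r * g)) : IsRationalPS g := by
  obtain ⟨p, q, hq0, hqg⟩ := h
  refine ⟨p, q * r, ?_, ?_⟩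
  · rw [mul_coeff_zero]
    exact mul_ne_zero hq0 hr
  · rw [Polynomial.coe_mul, mul_assoc, hqg]

end EulerProduct

/-- Let `E` be the Euler product `∏_{n≥1} (1 − zⁿ)`, characterized by agreement with
its partial products in low degrees. Then
`f(z) = 1/((1−2z)²·E(z))` is not a rational function; equivalently, `E(z) = ∏ (1−zⁿ)`
is not a rational function. -/
theorem stmt_10 (E : PowerSeries ℚ)
    (hE : ∀ k N : ℕ, k ≤ N →
      (PowerSeries.coeff (R := ℚ) k) E =
        (PowerSeries.coeff (R := ℚ) k) (∏ n ∈ Finset.range N, (1 - X ^ (n+1)))) :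
    ¬ IsRationalPS (((1 - 2*X)^2 * E : PowerSeries ℚ)⁻¹) ∧ ¬ IsRationalPS E := by
  have hirr := not_isRationalPS_of_coeff_eq_eulerPoly hE
  refine ⟨fun h => hirr ?_, hirr⟩
  have hE0 : constantCoeff E = 1 := by simpa using hE 0 0 le_rfl
  have hcoe : ((1 - 2 * X) ^ 2 : PowerSeries ℚ) = ((1 - 2 * Polynomial.X) ^ 2 : Polynomial ℚ) := by
    rw [← Polynomial.coeToPowerSeries.ringHom_apply, map_pow, map_sub, map_one, map_mul,
      map_ofNat, Polynomial.coeToPowerSeries.ringHom_apply, Polynomial.coe_X]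
  have hr : ((1 - 2 * Polynomial.X) ^ 2 : Polynomial ℚ).coeff 0 ≠ 0 := by
    rw [Polynomial.coeff_zero_eq_eval_zero]; simp
  refine IsRationalPS.of_coe_mul hr ?_
  rw [← hcoe]
  exact IsRationalPS.of_inv (by simp [hE0]) h
end

section
/- If 1/R^!(z) = 1 − 9z + 9z² − z³ − 5z⁴ + 4z⁵ − z⁶ and the Hilbert series of the double dual is G(z) = 1 + 9z + 9z² + z³, then R^!(z)·G(−z) ≠ 1; in particular the coefficient of z⁴ in R^!(z)·G(−z) equals 5. -/
open PowerSeries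

/-! If `G = D + X^k E` with `k > 0`, then `D⁻¹ G = 1 + X^k D⁻¹ E`, so the first coefficient of
`D⁻¹ G` beyond the constant term sits in degree `k` and equals `E(0) / D(0)`. For case 83,
`G(-z) = D + z⁴ (5 - 4z + z²)` with `D = 1/R^!(z)`, which gives `5` in degree `4`. -/

variable {K : Type*} [Field K]

theorem PowerSeries.inv_mul_add_X_pow_mul {D : K⟦X⟧} (hD : constantCoeff D ≠ 0) (k : ℕ)
    (E : K⟦X⟧) : D⁻¹ * (D + X ^ k * E) = 1 + X ^ k * (D⁻¹ * E) := by
  rw [mul_add, PowerSeries.inv_mul_cancel D hD]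
  ring

theorem PowerSeries.coeff_inv_mul_add_X_pow_mul {D : K⟦X⟧} (hD : constantCoeff D ≠ 0) {k : ℕ}
    (hk : k ≠ 0) (E : K⟦X⟧) :
    coeff k (D⁻¹ * (D + X ^ k * E)) = constantCoeff E / constantCoeff D := by
  rw [inv_mul_add_X_pow_mul hD, map_add, coeff_one, if_neg hk, zero_add,
    coeff_X_pow_mul', if_pos le_rfl, Nat.sub_self, coeff_zero_eq_constantCoeff, map_mul,
    constantCoeff_inv, inv_mul_eq_div]

/-- Case 83: with `1/R^!(z) = 1 − 9z + 9z² − z³ − 5z⁴ + 4z⁵ − z⁶` and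
`G(z) = 1 + 9z + 9z² + z³`, we have `R^!(z)·G(−z) ≠ 1`; in particular the
coefficient of `z⁴` in `R^!(z)·G(−z)` equals `5`. -/
theorem stmt_11 :
    ((1 - 9*X + 9*X^2 - X^3 - 5*X^4 + 4*X^5 - X^6 : PowerSeries ℚ)⁻¹ *
        (1 - 9*X + 9*X^2 - X^3) ≠ 1) ∧
    (PowerSeries.coeff (R := ℚ) 4)
      ((1 - 9*X + 9*X^2 - X^3 - 5*X^4 + 4*X^5 - X^6 : PowerSeries ℚ)⁻¹ *
        (1 - 9*X + 9*X^2 - X^3)) = 5 := by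
  set D : ℚ⟦X⟧ := 1 - 9*X + 9*X^2 - X^3 - 5*X^4 + 4*X^5 - X^6 with hD
  have hG : (1 - 9*X + 9*X^2 - X^3 : ℚ⟦X⟧) = D + X ^ 4 * (5 - 4*X + X^2) := by
    rw [hD]; ring
  have hD0 : constantCoeff D = 1 := by simp [hD]
  have hcoeff : coeff 4 (D⁻¹ * (1 - 9*X + 9*X^2 - X^3)) = 5 := by
    rw [hG, coeff_inv_mul_add_X_pow_mul (by simp [hD0]) four_ne_zero, hD0]
    simpa using map_ofNat constantCoeff 5
  refine ⟨fun h => ?_, hcoeff⟩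
  rw [h, coeff_one] at hcoeff
  norm_num at hcoeff
end
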